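/- Let G be an undirected graph on N vertices and let G₂ be the complete graph on N vertices. Assign every vertex of each graph to its own block (B₁ = B₂ = N), and consider selecting s = k shared blocks with pooled parameters on shared pairs and free parameters elsewhere, as in the SSBM-fixed problem. Then there is a choice of shared blocks achieving total log-likelihood 0 if and only if G contains a clique of size k. -/

import Mathlib

/-- Log-likelihood contribution of an ordered pair of distinct singleton blocks in
the k-clique reduction: graph 1 has edge indicator `c ∈ {0,1}`, graph 2 (complete)
always has an edge.  If the pair is shared, both graphs use the pooled MLE
`θ = (c+1)/2`; otherwise each graph uses its own MLE (`c` resp. `1`).  The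
convention `0·log 0 = 0` holds since `Real.log 0 = 0`. -/
noncomputable def cliquePairTerm (c : ℝ) (shared : Bool) : ℝ :=
  (c * Real.log (if shared then (c + 1) / 2 else c) +
    (1 - c) * Real.log (1 - (if shared then (c + 1) / 2 else c))) +
  (1 * Real.log (if shared then (c + 1) / 2 else 1) +
    0 * Real.log (1 - (if shared then (c + 1) / 2 else 1)))

open Finset in
/-- The SSBM-fixed objective of the k-clique reduction with singleton blocks,
where `W` is the set of vertices of `G` whose blocks are shared with the complete
graph: the total log-likelihood summed over all ordered pairs of distinct
vertices. -/
noncomputable def cliqueReductionObj {V : Type*} [Fintype V] [DecidableEq V]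
    (G : SimpleGraph V) [DecidableRel G.Adj] (W : Finset V) : ℝ :=
  ∑ p ∈ (Finset.univ : Finset V).offDiag,
    cliquePairTerm (if G.Adj p.1 p.2 then (1 : ℝ) else 0)
      (decide (p.1 ∈ W ∧ p.2 ∈ W))

/-
Every pair term is `≤ 0`, and it is `< 0` exactly for a shared non-edge, where both graphs are
forced onto the pooled parameter `1/2` and pay `2 log (1/2)`. So the objective vanishes iff no
two shared vertices are non-adjacent, i.e. iff the shared vertices form a clique of `G`.
-/

lemma cliquePairTerm_one (shared : Bool) : cliquePairTerm 1 shared = 0 := by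
  cases shared <;> norm_num [cliquePairTerm]

lemma cliquePairTerm_zero_false : cliquePairTerm 0 false = 0 := by
  norm_num [cliquePairTerm]

lemma cliquePairTerm_zero_true : cliquePairTerm 0 true = -(2 * Real.log 2) := by
  norm_num [cliquePairTerm]
  rw [one_div, Real.log_inv]
  ring

lemma cliquePairTerm_zero_true_neg : cliquePairTerm 0 true < 0 := by
  rw [cliquePairTerm_zero_true]
  have := Real.log_pos one_lt_two
  linarith

lemma cliquePairTerm_indicator_nonpos (P : Prop) [Decidable P] (shared : Bool) :
    cliquePairTerm (if P then 1 else 0) shared ≤ 0 := by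
  split_ifs
  · exact (cliquePairTerm_one shared).le
  · cases shared
    · exact cliquePairTerm_zero_false.le
    · exact cliquePairTerm_zero_true_neg.le

lemma cliquePairTerm_indicator_eq_zero_iff (P : Prop) [Decidable P] (shared : Bool) :
    cliquePairTerm (if P then 1 else 0) shared = 0 ↔ (shared = true → P) := by
  by_cases hP : P
  · simp [hP, cliquePairTerm_one]
  · cases shared
    · simp [hP, cliquePairTerm_zero_false]
    · simp [hP, cliquePairTerm_zero_true_neg.ne]

lemma cliqueReductionObj_eq_zero_iff {V : Type*} [Fintype V] [DecidableEq V]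
    (G : SimpleGraph V) [DecidableRel G.Adj] (W : Finset V) :
    cliqueReductionObj G W = 0 ↔ G.IsClique (W : Set V) := by
  rw [cliqueReductionObj,
    Finset.sum_eq_zero_iff_of_nonpos fun _ _ => cliquePairTerm_indicator_nonpos _ _]
  simp only [cliquePairTerm_indicator_eq_zero_iff, Finset.mem_offDiag, Finset.mem_univ,
    true_and, decide_eq_true_eq, Prod.forall, SimpleGraph.IsClique, Set.Pairwise,
    Finset.mem_coe]
  grind

theorem cliqueReduction_zero_iff_kclique_general {V : Type*} [Fintype V] [DecidableEq V]
    (G : SimpleGraph V) [DecidableRel G.Adj] (k : ℕ) :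
    (∃ W : Finset V, W.card = k ∧ cliqueReductionObj G W = 0) ↔
    ∃ W : Finset V, G.IsNClique k W := by
  simp only [cliqueReductionObj_eq_zero_iff, SimpleGraph.isNClique_iff, and_comm]

/-- There is a choice of `k` shared singleton blocks achieving total
log-likelihood `0` iff `G` contains a clique of size `k`. -/
theorem cliqueReduction_zero_iff_kclique {V : Type*} [Fintype V] [DecidableEq V]
    (G : SimpleGraph V) [DecidableRel G.Adj] (k : ℕ) (hk : k ≤ Fintype.card V) :
    (∃ W : Finset V, W.card = k ∧ cliqueReductionObj G W = 0) ↔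
    ∃ W : Finset V, G.IsNClique k W :=
  cliqueReduction_zero_iff_kclique_general G k
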